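/- Let f : (𝔽₂)ⁿ → 𝔽₂ admit a layer representation with layers L₁,…,L_r of sizes ℓ₁,…,ℓ_r, and let k ∈ L_ρ for some 1 ≤ ρ ≤ r. Then the number of states x ∈ (𝔽₂)ⁿ with f(x[k := 1]) ≠ f(x) is at most 2^{n − (ℓ₁ + ℓ₂ + ⋯ + ℓ_ρ)}; that is, the upper bound on the number of changed state-space transitions for edge deletion remains the same when the edge x_k → x_t is constantly expressed instead of deleted. -/

import Mathlib

/-!
If `f(x[k := 1]) ≠ f(x)`, then `x_k = 0`, and no variable `x_j` (`j ≠ k`) of a layer `L_i` with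
`i ≤ ρ` takes its canalizing value: a vanishing factor `x_j + a_j` makes the nested expression
collapse to a value determined by the monomials of the layers before `L_i`, none of which contains
`x_k`, so it cannot see the change of `x_k`. Hence every changed state has all
`ℓ₁ + ⋯ + ℓ_ρ` coordinates in `L₁ ∪ ⋯ ∪ L_ρ` prescribed, which leaves
`2^(n − (ℓ₁ + ⋯ + ℓ_ρ))` of them.
-/

/-- Evaluation of the nested expression built from a list of (already evaluated)
extended monomial values `[M₁, …, M_r]` and a core value `p`:
`nestAux [] p = p` and `nestAux (m :: ms) p = m * nestAux ms p + 1`.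
With this convention, the layer form
`f = M₁(M₂(⋯(M_{r−1}(M_r·P_c + 1) + 1)⋯) + 1) + b` equals
`nestAux [M₁,…,M_r] P_c + 1 + b` in `ZMod 2`. -/
def nestAux : List (ZMod 2) → ZMod 2 → ZMod 2
  | [], p => p
  | m :: ms, p => m * nestAux ms p + 1

/-- A layer representation of a Boolean function `f : (𝔽₂)ⁿ → 𝔽₂`: `r ≥ 1` pairwise
disjoint nonempty layers `L₁,…,L_r` of variable indices, canalizing inputs `a j`,
a constant `b`, and a core function `Pc` depending only on the variables outside all
layers and having no canalizing variables (or being the constant `1`), such that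
`f(x) = M₁(M₂(⋯(M_{r−1}(M_r·P_c + 1) + 1)⋯) + 1) + b`
where `M_i = ∏_{j ∈ L_i} (x_j + a_j)`, all arithmetic in `𝔽₂ = ZMod 2`. -/
structure LayerRep (n : ℕ) (f : (Fin n → ZMod 2) → ZMod 2) where
  r : ℕ
  r_pos : 0 < r
  L : Fin r → Finset (Fin n)
  a : Fin n → ZMod 2
  b : ZMod 2
  Pc : (Fin n → ZMod 2) → ZMod 2
  layers_nonempty : ∀ i, (L i).Nonempty
  layers_disjoint : ∀ i j, i ≠ j → Disjoint (L i) (L j)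
  Pc_depends : ∀ x y : Fin n → ZMod 2,
    (∀ j : Fin n, (∀ i, j ∉ L i) → x j = y j) → Pc x = Pc y
  Pc_noncanalizing : (∀ x, Pc x = 1) ∨
    (∀ (j : Fin n) (c d : ZMod 2), ¬ ∀ x, x j = c → Pc x = d)
  repr_eq : ∀ x, f x =
    nestAux (List.ofFn fun i => ∏ j ∈ L i, (x j + a j)) (Pc x) + 1 + b

open Finset

theorem nestAux_append (l m : List (ZMod 2)) (p : ZMod 2) :
    nestAux (l ++ m) p = nestAux l (nestAux m p) := by
  induction l with
  | nil => rfl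
  | cons x l ih => rw [List.cons_append, nestAux, nestAux, ih]

theorem nestAux_zero_cons (l : List (ZMod 2)) (p : ZMod 2) : nestAux (0 :: l) p = 1 := by
  rw [nestAux, zero_mul, zero_add]

theorem nestAux_eq_take_of_getElem_eq_zero {l : List (ZMod 2)} {i : ℕ} (hi : i < l.length)
    (h : l[i] = 0) (p : ZMod 2) : nestAux l p = nestAux (l.take i) 1 := by
  conv_lhs => rw [← List.take_append_drop i l, List.drop_eq_getElem_cons hi, h]
  rw [nestAux_append, nestAux_zero_cons]

theorem nestAux_ofFn_eq_of_eq_zero {r : ℕ} {M M' : Fin r → ZMod 2} {i : Fin r}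
    (hlt : ∀ j < i, M j = M' j) (hM : M i = 0) (hM' : M' i = 0) (p q : ZMod 2) :
    nestAux (List.ofFn M) p = nestAux (List.ofFn M') q := by
  rw [nestAux_eq_take_of_getElem_eq_zero (l := List.ofFn M) (i := i) (by simp)
      (by simpa using hM),
    nestAux_eq_take_of_getElem_eq_zero (l := List.ofFn M') (i := i) (by simp)
      (by simpa using hM')]
  congr 1
  refine List.ext_getElem (by simp) fun j hj _ => ?_
  simp only [List.length_take, List.length_ofFn, lt_min_iff] at hj
  simpa using hlt ⟨j, hj.2⟩ hj.1

theorem card_filter_forall_mem_ne {ι α : Type*} [Fintype ι] [DecidableEq ι] [Fintype α]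
    [DecidableEq α] (T : Finset ι) (c : ι → α)
    [DecidablePred fun x : ι → α => ∀ j ∈ T, x j ≠ c j] :
    #{x : ι → α | ∀ j ∈ T, x j ≠ c j}
      = (Fintype.card α - 1) ^ #T * Fintype.card α ^ (Fintype.card ι - #T) := by
  have : ({x : ι → α | ∀ j ∈ T, x j ≠ c j} : Finset (ι → α))
      = Fintype.piFinset fun j => if j ∈ T then {c j}ᶜ else univ := by
    ext x
    simp only [mem_filter, mem_univ, true_and, Fintype.mem_piFinset]
    refine forall_congr' fun j => ?_
    split_ifs <;> simp [*]
  rw [this, Fintype.card_piFinset]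
  simp only [apply_ite card, card_compl, card_singleton, card_univ]
  rw [prod_ite, prod_const, prod_const, filter_mem_eq_inter, univ_inter, filter_not, card_sdiff,
    filter_mem_eq_inter, univ_inter, inter_univ, card_univ]

namespace LayerRep

variable {n : ℕ} {f : (Fin n → ZMod 2) → ZMod 2} (R : LayerRep n f)

theorem Pc_update_of_mem {k : Fin n} {ρ : Fin R.r} (hk : k ∈ R.L ρ) (x : Fin n → ZMod 2)
    (v : ZMod 2) : R.Pc (Function.update x k v) = R.Pc x :=
  R.Pc_depends _ _ fun _ hj => Function.update_of_ne (fun h => hj ρ (by rwa [h])) _ _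

theorem apply_update_eq_of_factor_eq_zero {k : Fin n} {ρ : Fin R.r} (hk : k ∈ R.L ρ)
    {i : Fin R.r} (hi : i ≤ ρ) {j : Fin n} (hj : j ∈ R.L i) (hjk : j ≠ k)
    {x : Fin n → ZMod 2} (hx : x j + R.a j = 0) (v : ZMod 2) :
    f (Function.update x k v) = f x := by
  rw [R.repr_eq, R.repr_eq, R.Pc_update_of_mem hk]
  congr 2
  refine nestAux_ofFn_eq_of_eq_zero (i := i) (fun i' hi' => ?_) ?_ ?_ _ _
  · have hk' : k ∉ R.L i' := fun hk' =>
      Finset.disjoint_left.1 (R.layers_disjoint _ _ (hi'.trans_le hi).ne) hk' hk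
    exact Finset.prod_congr rfl fun j' hj' =>
      by rw [Function.update_of_ne (ne_of_mem_of_not_mem hj' hk')]
  · exact Finset.prod_eq_zero hj (by rwa [Function.update_of_ne hjk])
  · exact Finset.prod_eq_zero hj hx

theorem update_ne_subset_forall_mem_ne {k : Fin n} {ρ : Fin R.r} (hk : k ∈ R.L ρ) :
    ({x | f (Function.update x k 1) ≠ f x} : Finset (Fin n → ZMod 2)) ⊆
      ({x | ∀ j ∈ (Iic ρ).biUnion R.L, x j ≠ Function.update (-R.a) k 1 j} : Finset _) := by
  intro x
  simp only [mem_filter, mem_univ, true_and, mem_biUnion, mem_Iic]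
  rintro hchanged j ⟨i, hi, hj⟩
  by_cases hjk : j = k
  · subst hjk
    rw [Function.update_self]
    intro hx
    exact hchanged (by rw [← hx, Function.update_eq_self])
  · rw [Function.update_of_ne hjk, Pi.neg_apply]
    intro hx
    exact hchanged
      (R.apply_update_eq_of_factor_eq_zero hk hi hj hjk (by rw [hx, neg_add_cancel]) 1)

end LayerRep

/-- The analogue of Method 2(a) for constant expression of an edge: if `x_k` is a
canalizing variable of `f` lying in the `ρ`-th layer (`0`-indexed here), then setting
the `k`-th input to `1` changes the value of `f` on at most
`2 ^ (n − (ℓ₁ + ⋯ + ℓ_ρ))` states, where `ℓ₁, …, ℓ_ρ` are the sizes of the layers that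
are at least as dominant as that of `x_k`; i.e. the upper bound on the number of
changed state-space transitions for edge deletion remains the same when the edge
`x_k → x_t` is constantly expressed instead of deleted. -/
theorem edge_expression_change_bound_canalizing {n : ℕ}
    (f : (Fin n → ZMod 2) → ZMod 2) (R : LayerRep n f)
    (k : Fin n) (ρ : Fin R.r) (hk : k ∈ R.L ρ) :
    (Finset.univ.filter fun x : Fin n → ZMod 2 =>
        f (Function.update x k 1) ≠ f x).card
      ≤ 2 ^ (n - ∑ i ∈ Finset.Iic ρ, (R.L i).card) := by
  refine (card_le_card (R.update_ne_subset_forall_mem_ne hk)).trans ?_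
  rw [card_filter_forall_mem_ne, ← card_biUnion fun i _ j _ hij => R.layers_disjoint i j hij]
  simp
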